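/- arXiv:2602.08848 — 2 statements merged into one kernel-verified Lean document; each statement's English description precedes it below -/
import Mathlib

section
/- Let A be a tree multi-algebra of a sequential formalism whose basic relations closed under projection are all satisfiable. Then every ↱-consistent relation of A is satisfiable. -/
open scoped Classical

/-- An atom (basic relation) of a Boolean algebra: a nonzero element `b` such that
for every `r`, `r ⊓ b = b` or `r ⊓ b = ⊥`. -/
def IsAtomRel {α : Type*} [BooleanAlgebra α] (b : α) : Prop :=
  b ≠ ⊥ ∧ ∀ r : α, r ⊓ b = b ∨ r ⊓ b = ⊥

/-- The finset of atoms below `r` (`r ⊆ r'` means `r ⊔ r' = r'`, i.e. `r ≤ r'`). -/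
noncomputable def atomsBelow {α : Type*} [BooleanAlgebra α] [Fintype α] (r : α) : Finset α :=
  Finset.univ.filter fun b => IsAtomRel b ∧ b ≤ r

/-- A non-associative relation algebra: a Boolean algebra with composition,
converse and identity satisfying the usual axioms (incl. the Peircean law). -/
structure NA (α : Type*) [BooleanAlgebra α] where
  comp : α → α → α
  conv : α → α
  e : α
  conv_conv : ∀ x, conv (conv x) = x
  conv_sup : ∀ x y, conv (x ⊔ y) = conv x ⊔ conv y
  conv_comp : ∀ x y, conv (comp x y) = comp (conv y) (conv x)
  comp_e : ∀ x, comp x e = x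
  e_comp : ∀ x, comp e x = x
  comp_sup : ∀ x y z, comp x (y ⊔ z) = comp x y ⊔ comp x z
  peirce : ∀ x y z, comp x y ⊓ conv z = ⊥ ↔ comp y z ⊓ conv x = ⊥

/-- Relational composition of sets of pairs. -/
def relComp {U : Type*} (R S : Set (U × U)) : Set (U × U) :=
  {p | ∃ y, (p.1, y) ∈ R ∧ (y, p.2) ∈ S}

/-- A symmetric qualitative formalism `(A, U, φ)`. -/
structure SQF (α : Type*) [BooleanAlgebra α] [Fintype α] (U : Type*) extends NA α where
  nonempty_univ : Nonempty U
  φ : α → Set (U × U)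
  φ_bot : φ ⊥ = ∅
  φ_conv : ∀ r, φ (conv r) = {p | (p.2, p.1) ∈ φ r}
  φ_inf : ∀ r r', φ (r ⊓ r') = φ r ∩ φ r'
  φ_sup : ∀ r r', φ (r ⊔ r') = φ r ∪ φ r'
  φ_comp : ∀ r r', relComp (φ r) (φ r') ∩ φ ⊤ ⊆ φ (comp r r')

/-- A projection operator between two non-associative relation algebras. -/
structure ProjOp {α β : Type*} [BooleanAlgebra α] [BooleanAlgebra β]
    (A : NA α) (B : NA β) where
  f : α → β
  map_sup : ∀ r r', f (r ⊔ r') = f r ⊔ f r'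
  map_conv : ∀ r, f (A.conv r) = B.conv (f r)

/-- A multi-algebra: a family of finite non-associative relation algebras together
with projection operators between any two distinct components. -/
structure MultiAlg (ι : Type*) [Fintype ι] (α : ι → Type*)
    [∀ i, BooleanAlgebra (α i)] [∀ i, Fintype (α i)] where
  na : ∀ i, NA (α i)
  proj : ∀ i j, i ≠ j → α i → α j
  proj_sup : ∀ i j (h : i ≠ j) (r r' : α i),
    proj i j h (r ⊔ r') = proj i j h r ⊔ proj i j h r'
  proj_conv : ∀ i j (h : i ≠ j) (r : α i),
    proj i j h ((na i).conv r) = (na j).conv (proj i j h r)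

namespace MultiAlg

variable {ι : Type*} [Fintype ι] {α : ι → Type*} [∀ i, BooleanAlgebra (α i)]
  [∀ i, Fintype (α i)]

/-- Componentwise composition of multi-algebra relations. -/
def comp (M : MultiAlg ι α) (R R' : ∀ i, α i) : ∀ i, α i :=
  fun i => (M.na i).comp (R i) (R' i)

/-- Componentwise converse of multi-algebra relations. -/
def conv (M : MultiAlg ι α) (R : ∀ i, α i) : ∀ i, α i :=
  fun i => (M.na i).conv (R i)

/-- A basic relation is a tuple of atoms. -/
def Basic (M : MultiAlg ι α) (R : ∀ i, α i) : Prop := ∀ i, IsAtomRel (R i)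

/-- `R` is closed under projection: `Rⱼ ⊆ ↱ⁱʲ(Rᵢ)` for all distinct `i, j`. -/
def RelClosedProj (M : MultiAlg ι α) (R : ∀ i, α i) : Prop :=
  ∀ i j (h : i ≠ j), R j ≤ M.proj i j h (R i)

/-- One pass of the projection-closure iteration: replace each `Rⱼ` by
`Rⱼ ⊓ ↱ⁱʲ(Rᵢ)` for all `i ≠ j`. -/
noncomputable def pstep (M : MultiAlg ι α) (R : ∀ i, α i) : ∀ i, α i :=
  fun j => R j ⊓ Finset.univ.inf fun i => if h : i ≠ j then M.proj i j h (R i) else ⊤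

/-- The projection closure `↱R`, obtained by iterating the refinement step
until a fixed point is reached (reached after at most `card` steps). -/
noncomputable def pcl (M : MultiAlg ι α) (R : ∀ i, α i) : ∀ i, α i :=
  M.pstep^[Fintype.card (∀ i, α i)] R

/-- A relation is `↱`-consistent if it is closed under projection and
not trivially inconsistent. -/
def PConsistent (M : MultiAlg ι α) (R : ∀ i, α i) : Prop :=
  M.RelClosedProj R ∧ ∀ i, R i ≠ ⊥

/-- The inverse projection operator `↰ⁱʲ` of `↱ⁱʲ`, defined on atoms by
`b ≤ ↰ⁱʲ(b')` iff `b' ≤ ↱ⁱʲ(b)` and extended by union. -/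
noncomputable def iproj (M : MultiAlg ι α) (i j : ι) (h : i ≠ j) (r : α j) : α i :=
  (Finset.univ.filter fun b : α i =>
    IsAtomRel b ∧ ∃ b' : α j, IsAtomRel b' ∧ b' ≤ r ∧ b' ≤ M.proj i j h b).sup id

/-- `PathUp M E i j l x y`: following the directed path `l = [i, …, j]` of edges of `E`
upwards, the composite of the direct projections along it maps `x : α i` to `y : α j`. -/
inductive PathUp (M : MultiAlg ι α) (E : ι → ι → Prop) : ∀ i j : ι, List ι → α i → α j → Prop
  | refl (i : ι) (x : α i) : PathUp M E i i [i] x x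
  | step {i j k : ι} {l : List ι} (e : E i j) (h : i ≠ j) (x : α i) {y : α k} :
      PathUp M E j k l (M.proj i j h x) y → PathUp M E i k (i :: l) x y

/-- `PathDown M E i j l x y`: following the path `l = [i, …, j]` downwards along
reversed edges of `E`, the composite of the inverse projections maps `x : α i` to
`y : α j`. -/
inductive PathDown (M : MultiAlg ι α) (E : ι → ι → Prop) : ∀ i j : ι, List ι → α i → α j → Prop
  | refl (i : ι) (x : α i) : PathDown M E i i [i] x x
  | step {i j k : ι} {l : List ι} (e : E j i) (h : j ≠ i) (x : α i) {y : α k} :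
      PathDown M E j k l (M.iproj j i h x) y → PathDown M E i k (i :: l) x y

end MultiAlg

/-- A plenary anti-tree structure on a multi-algebra: an anti-tree (a unique directed
path from every node to the root) on the components such that, along the (unique)
duplicate-free chain `i = k₀ → ⋯ → k_s ← ⋯ ← k_{s+t+1} = j` connecting two distinct
components, the composite of the direct projections going up and of the inverse
projections going down refines the direct projection `↱ⁱʲ` on every atom.
A multi-algebra admitting such a structure is a tree multi-algebra. -/
structure PlenaryAntiTree {ι : Type*} [Fintype ι] {α : ι → Type*}
    [∀ i, BooleanAlgebra (α i)] [∀ i, Fintype (α i)] (M : MultiAlg ι α) where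
  E : ι → ι → Prop
  root : ι
  unique_path : ∀ v : ι, v ≠ root →
    ∃! l : List ι, l.head? = some v ∧ l.getLast? = some root ∧ List.Chain' E l
  plenary : ∀ i j (hij : i ≠ j) (b : α i), IsAtomRel b →
    ∀ (w : ι) (lu ld : List ι) (y : α w) (z : α j),
      MultiAlg.PathUp M E i w lu b y → MultiAlg.PathDown M E w j ld y z →
      (lu ++ ld.tail).Nodup → z ≤ M.proj i j hij b

/-- A sequential formalism `(A, U, I)` over a multi-algebra. -/
structure SeqFormalism (ι : Type*) [Fintype ι] (α : ι → Type*)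
    [∀ i, BooleanAlgebra (α i)] [∀ i, Fintype (α i)] (U : Type*) where
  M : MultiAlg ι α
  I : (∀ i, α i) → Set (U × U)
  I_pcl : ∀ R, I (M.pcl R) = I R
  I_conv : ∀ R, I (M.conv R) = {p | (p.2, p.1) ∈ I R}
  I_bot : I ⊥ = ∅
  I_comp : ∀ R R', relComp (I R) (I R') ∩ I ⊤ ⊆ I (M.comp R R')
  I_inf : ∀ R R', I (R ⊓ R') = I R ∩ I R'
  I_basic : ∀ R, I R = ⋃ B ∈ {B : ∀ i, α i | M.Basic B ∧ B ≤ R}, I B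

section Networks

variable {ι : Type*} [Fintype ι] {α : ι → Type*} [∀ i, BooleanAlgebra (α i)]
  [∀ i, Fintype (α i)] {U : Type*} {V : Type*} [Fintype V]

/-- A network (over variables `V`) is trivially inconsistent if some component of some
constraint between distinct variables is `⊥`. -/
def NetTrivIncons (N : V → V → ∀ i, α i) : Prop := ∃ x y : V, x ≠ y ∧ ∃ i, N x y i = ⊥

/-- A scenario: all constraints between distinct variables are basic. -/
def Scenario (M : MultiAlg ι α) (N : V → V → ∀ i, α i) : Prop :=
  ∀ x y : V, x ≠ y → M.Basic (N x y)

/-- `N` refines `N'`. -/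
def Refines (N N' : V → V → ∀ i, α i) : Prop := ∀ x y : V, x ≠ y → N x y ≤ N' x y

/-- `u` is a solution of the network `N`. -/
def IsSolution (F : SeqFormalism ι α U) (N : V → V → ∀ i, α i) (u : V → U) : Prop :=
  ∀ x y : V, x ≠ y → (u x, u y) ∈ F.I (N x y)

/-- A network is satisfiable if it has a solution. -/
def NetSat (F : SeqFormalism ι α U) (N : V → V → ∀ i, α i) : Prop :=
  ∃ u : V → U, IsSolution F N u

/-- The network is closed under composition. -/
def ClosedComp (M : MultiAlg ι α) (N : V → V → ∀ i, α i) : Prop :=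
  ∀ x y z : V, x ≠ y → y ≠ z → x ≠ z → N x z ≤ M.comp (N x y) (N y z)

/-- The network is closed under projection. -/
def NetClosedProj (M : MultiAlg ι α) (N : V → V → ∀ i, α i) : Prop :=
  ∀ x y : V, x ≠ y → M.RelClosedProj (N x y)

/-- Algebraically closed: closed under composition and projection. -/
def AlgClosed (M : MultiAlg ι α) (N : V → V → ∀ i, α i) : Prop :=
  ClosedComp M N ∧ NetClosedProj M N

/-- Algebraically consistent: algebraically closed and not trivially inconsistent. -/
def AlgConsistent (M : MultiAlg ι α) (N : V → V → ∀ i, α i) : Prop :=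
  AlgClosed M N ∧ ¬ NetTrivIncons N

/-- One pass of the algebraic-closure iteration: close each constraint under projection
and refine it by all compositions `N^{xy} ∘ N^{yz}`. -/
noncomputable def aclStep (M : MultiAlg ι α) (N : V → V → ∀ i, α i) : V → V → ∀ i, α i :=
  fun x z => if x = z then N x z else
    M.pcl (N x z) ⊓ Finset.univ.inf fun y =>
      if x ≠ y ∧ y ≠ z then M.comp (N x y) (N y z) else ⊤

/-- The algebraic closure of a network: iterate the refinement operations until a
fixed point is reached. -/
noncomputable def acl (M : MultiAlg ι α) (N : V → V → ∀ i, α i) : V → V → ∀ i, α i :=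
  (aclStep M)^[Fintype.card (V → V → ∀ i, α i)] N

/-- Closing a network under projection only. -/
noncomputable def netProjClose (M : MultiAlg ι α) (N : V → V → ∀ i, α i) :
    V → V → ∀ i, α i :=
  fun x y => if x = y then N x y else M.pcl (N x y)

/-- One pass of the composition-closure iteration. -/
noncomputable def compStep (M : MultiAlg ι α) (N : V → V → ∀ i, α i) : V → V → ∀ i, α i :=
  fun x z => if x = z then N x z else
    N x z ⊓ Finset.univ.inf fun y =>
      if x ≠ y ∧ y ≠ z then M.comp (N x y) (N y z) else ⊤

/-- Closing a network under composition only. -/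
noncomputable def compClose (M : MultiAlg ι α) (N : V → V → ∀ i, α i) : V → V → ∀ i, α i :=
  (compStep M)^[Fintype.card (V → V → ∀ i, α i)] N

/-- A network over a subset `S` of the multi-algebra. -/
def NetworkOver (S : Set (∀ i, α i)) (N : V → V → ∀ i, α i) : Prop :=
  ∀ x y : V, x ≠ y → N x y ∈ S

end Networks

section Subsets

variable {ι : Type*} [Fintype ι] {α : ι → Type*} [∀ i, BooleanAlgebra (α i)]
  [∀ i, Fintype (α i)] {U : Type*}

/-- `S` is `↱`-closed: the projection closure of any relation of `S` is in `S`. -/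
def PclClosed (M : MultiAlg ι α) (S : Set (∀ i, α i)) : Prop :=
  ∀ R ∈ S, M.pcl R ∈ S

/-- `S` is `∘∧`-closed: `(R ∘ R') ∧ R'' ∈ S` for all `R, R', R'' ∈ S`. -/
def CompInfClosed (M : MultiAlg ι α) (S : Set (∀ i, α i)) : Prop :=
  ∀ R ∈ S, ∀ R' ∈ S, ∀ R'' ∈ S, (M.comp R R') ⊓ R'' ∈ S

/-- `S` is atomizable: every satisfiable relation of `S` contains a satisfiable
basic relation belonging to `S`. -/
def Atomizable (F : SeqFormalism ι α U) (S : Set (∀ i, α i)) : Prop :=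
  ∀ R ∈ S, F.I R ≠ ∅ → ∃ B ∈ S, F.M.Basic B ∧ B ≤ R ∧ F.I B ≠ ∅

/-- `S` is dissociable: closing any network over `S` under projection then under
composition yields a network that is algebraically consistent or trivially
inconsistent. -/
def Dissociable (M : MultiAlg ι α) (S : Set (∀ i, α i)) : Prop :=
  ∀ (V : Type) [Fintype V], ∀ N : V → V → ∀ i, α i, NetworkOver S N →
    AlgConsistent M (compClose M (netProjClose M N)) ∨
      NetTrivIncons (compClose M (netProjClose M N))

/-- `S` is algebraically tractable: a network over `S` is satisfiable iff its
algebraic closure is not trivially inconsistent. -/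
def AlgTractable (F : SeqFormalism ι α U) (S : Set (∀ i, α i)) : Prop :=
  ∀ (V : Type) [Fintype V], ∀ N : V → V → ∀ i, α i, NetworkOver S N →
    (NetSat F N ↔ ¬ NetTrivIncons (acl F.M N))

/-- The `i`-th slice of a subset of a multi-algebra. -/
def sliceSet (S : Set (∀ i, α i)) (i : ι) : Set (α i) := {r | ∃ R ∈ S, R i = r}

end Subsets

section SingleAlgebraNetworks

variable {β : Type*} [BooleanAlgebra β] [Fintype β]

/-- One pass of the (classical, single-algebra) composition-closure iteration. -/
noncomputable def sCompStep {V : Type*} [Fintype V] (na : NA β) (n : V → V → β) :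
    V → V → β :=
  fun x z => if x = z then n x z else
    n x z ⊓ Finset.univ.inf fun y =>
      if x ≠ y ∧ y ≠ z then na.comp (n x y) (n y z) else ⊤

/-- The (classical) algebraic closure of a network over a single algebra. -/
noncomputable def sCompClose {V : Type*} [Fintype V] (na : NA β) (n : V → V → β) :
    V → V → β :=
  (sCompStep na)^[Fintype.card (V → V → β)] n

/-- Closure under composition for a network over a single algebra. -/
def sClosedComp {V : Type*} (na : NA β) (n : V → V → β) : Prop :=
  ∀ x y z : V, x ≠ y → y ≠ z → x ≠ z → n x z ≤ na.comp (n x y) (n y z)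

/-- A classical subclass is minimal: the algebraic closure of any network over it is
the minimal network, i.e. every basic relation contained in a relation of the closure
extends to an algebraically closed scenario refining the closure. -/
def SliceMinimal (na : NA β) (Si : Set β) : Prop :=
  ∀ (V : Type) [Fintype V], ∀ n : V → V → β, (∀ x y : V, x ≠ y → n x y ∈ Si) →
    ∀ x y : V, x ≠ y → ∀ b : β, IsAtomRel b → b ≤ sCompClose na n x y →
      ∃ s : V → V → β, (∀ p q : V, p ≠ q → IsAtomRel (s p q)) ∧
        (∀ p q : V, p ≠ q → s p q ≤ sCompClose na n p q) ∧
        s x y = b ∧ sClosedComp na s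

end SingleAlgebraNetworks

/-!
Choose the atoms of a basic relation `B ≤ R` from the root of the anti-tree downwards. If `p` is
the parent of `v`, then `Rₚ ≤ ↱ᵛᵖ(Rᵥ)` because `R` is closed under projection, and since `↱ᵛᵖ`
preserves joins the atom `Bₚ` already chosen lies below `↱ᵛᵖ(b)` for some atom `b ≤ Rᵥ`; put
`Bᵥ := b`. For distinct `i`, `j`, walk up from `i` to the first common vertex `w` of the root
paths of `i` and `j` and then down to `j`: the direct projections along the way stay above `B`,
and so do the inverse projections, since `Bₚ ≤ ↱ᶜᵖ(B_c)` on every edge. Plenarity then gives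
`Bⱼ ≤ ↱ⁱʲ(Bᵢ)`, so `B` is satisfiable by hypothesis, and `I(B) ⊆ I(R)`.
-/

theorem isAtomRel_iff_isAtom {β : Type*} [BooleanAlgebra β] {b : β} :
    IsAtomRel b ↔ IsAtom b := by
  refine ⟨fun hb => ⟨hb.1, fun c hc => ?_⟩,
    fun hb => ⟨hb.1, fun r => (hb.le_iff.1 inf_le_right).symm⟩⟩
  rcases hb.2 c with h | h <;> rw [inf_eq_left.2 hc.le] at h
  · exact absurd h hc.ne
  · exact h

theorem IsAtom.le_or_le_of_le_sup {β : Type*} [DistribLattice β] [OrderBot β] {a x y : β}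
    (ha : IsAtom a) (h : a ≤ x ⊔ y) : a ≤ x ∨ a ≤ y := by
  by_contra! hxy
  have : Disjoint a (x ⊔ y) :=
    disjoint_sup_right.2 ⟨ha.not_le_iff_disjoint.1 hxy.1, ha.not_le_iff_disjoint.1 hxy.2⟩
  exact ha.not_le_iff_disjoint.2 this h

theorem exists_isAtom_le_of_le_map {β γ : Type*} [BooleanAlgebra β] [Finite β]
    [DistribLattice γ] [OrderBot γ] {f : β → γ} (hf : ∀ x y, f (x ⊔ y) = f x ⊔ f y)
    {c : γ} (hc : IsAtom c) {r : β} (hr : r ≠ ⊥) (h : c ≤ f r) :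
    ∃ a, IsAtom a ∧ a ≤ r ∧ c ≤ f a := by
  induction r using WellFoundedLT.induction with
  | _ r ih =>
  obtain ⟨a, ha, har⟩ := (eq_bot_or_exists_atom_le r).resolve_left hr
  have hsplit : f r = f a ⊔ f (r \ a) := by rw [← hf, sup_sdiff_cancel_right har]
  rcases hc.le_or_le_of_le_sup (hsplit ▸ h) with hca | hcr
  · exact ⟨a, ha, har, hca⟩
  by_cases hra : r \ a = ⊥
  · rw [le_antisymm (sdiff_eq_bot_iff.1 hra) har] at h
    exact ⟨a, ha, har, h⟩
  obtain ⟨a', ha', ha'r, hca'⟩ := ih (r \ a) (sdiff_lt har ha.1) hra hcr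
  exact ⟨a', ha', ha'r.trans sdiff_le, hca'⟩

section AntiTree

variable {ι : Type*} (E : ι → ι → Prop) (root : ι)

def IsRootPath (v : ι) (l : List ι) : Prop :=
  l.head? = some v ∧ l.getLast? = some root ∧ l.IsChain E

def IsAntiTree : Prop :=
  ∀ v, v ≠ root → ∃! l, IsRootPath E root v l

variable {E root}

theorem isRootPath_root : IsRootPath E root root [root] :=
  ⟨rfl, rfl, List.isChain_singleton root⟩

theorem IsRootPath.cons {v p : ι} {l : List ι} (he : E v p) (hl : IsRootPath E root p l) :
    IsRootPath E root v (v :: l) := by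
  obtain ⟨hhead, hlast, hchain⟩ := hl
  refine ⟨rfl, by simp [List.getLast?_cons, hlast], List.isChain_cons.2 ⟨?_, hchain⟩⟩
  simp [hhead, he]

namespace IsAntiTree

noncomputable def path (hT : IsAntiTree E root) (v : ι) : List ι :=
  if h : v = root then [root] else (hT v h).exists.choose

theorem isRootPath_path (hT : IsAntiTree E root) (v : ι) :
    IsRootPath E root v (hT.path v) := by
  unfold path
  split_ifs with h
  · exact h ▸ isRootPath_root
  · exact (hT v h).exists.choose_spec

theorem path_root (hT : IsAntiTree E root) : hT.path root = [root] := by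
  simp [path]

theorem path_eq (hT : IsAntiTree E root) {v : ι} {l : List ι} (hv : v ≠ root)
    (hl : IsRootPath E root v l) : hT.path v = l :=
  (hT v hv).unique (hT.isRootPath_path v) hl

theorem exists_edge (hT : IsAntiTree E root) {v : ι} (hv : v ≠ root) : ∃ p, E v p := by
  obtain ⟨hhead, hlast, hchain⟩ := hT.isRootPath_path v
  rcases hpath : hT.path v with _ | ⟨a, _ | ⟨p, l⟩⟩ <;> rw [hpath] at hhead hlast hchain
  · simp at hhead
  · simp only [List.head?_cons, List.getLast?_singleton, Option.some_inj] at hhead hlast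
    exact absurd (hhead.symm.trans hlast) hv
  · simp only [List.head?_cons, Option.some_inj] at hhead
    exact ⟨p, hhead ▸ (List.isChain_cons_cons.1 hchain).1⟩

noncomputable def parent (hT : IsAntiTree E root) (v : ι) : ι :=
  if h : v = root then root else (hT.exists_edge h).choose

theorem edge_parent (hT : IsAntiTree E root) {v : ι} (hv : v ≠ root) : E v (hT.parent v) := by
  unfold parent
  rw [dif_neg hv]
  exact (hT.exists_edge hv).choose_spec

theorem path_of_ne_root (hT : IsAntiTree E root) {v : ι} (hv : v ≠ root) :
    hT.path v = v :: hT.path (hT.parent v) :=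
  hT.path_eq hv ((hT.isRootPath_path _).cons (hT.edge_parent hv))

theorem length_path_parent_lt (hT : IsAntiTree E root) {v : ι} (hv : v ≠ root) :
    (hT.path (hT.parent v)).length < (hT.path v).length := by
  rw [hT.path_of_ne_root hv, List.length_cons]
  exact Nat.lt_succ_self _

theorem parent_ne (hT : IsAntiTree E root) {v : ι} (hv : v ≠ root) : hT.parent v ≠ v :=
  fun h => (hT.length_path_parent_lt hv).ne (by rw [h])

theorem parent_induction (hT : IsAntiTree E root) {C : ι → Prop} (base : C root)
    (step : ∀ v, v ≠ root → C (hT.parent v) → C v) (v : ι) : C v :=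
  if hv : v = root then hv ▸ base
  else step v hv (hT.parent_induction base step (hT.parent v))
termination_by (hT.path v).length
decreasing_by exact hT.length_path_parent_lt hv

theorem length_path_le_of_mem (hT : IsAntiTree E root) {v w : ι} (hw : w ∈ hT.path v) :
    (hT.path w).length ≤ (hT.path v).length := by
  induction v using hT.parent_induction with
  | base => rw [hT.path_root, List.mem_singleton] at hw; rw [hw]
  | step v hv ih =>
    rw [hT.path_of_ne_root hv, List.mem_cons] at hw
    rcases hw with rfl | hw
    · exact le_rfl
    · exact (ih hw).trans (hT.length_path_parent_lt hv).le

theorem nodup_path (hT : IsAntiTree E root) (v : ι) : (hT.path v).Nodup := by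
  induction v using hT.parent_induction with
  | base => simp [hT.path_root]
  | step v hv ih =>
    rw [hT.path_of_ne_root hv, List.nodup_cons]
    exact ⟨fun hv_mem => (hT.length_path_le_of_mem hv_mem).not_gt (hT.length_path_parent_lt hv),
      ih⟩

theorem isChain_path (hT : IsAntiTree E root) (v : ι) :
    (hT.path v).IsChain fun c p => c ≠ root ∧ hT.parent c = p := by
  induction v using hT.parent_induction with
  | base => simp [hT.path_root]
  | step v hv ih =>
    rw [hT.path_of_ne_root hv, List.isChain_cons, (hT.isRootPath_path _).1]
    exact ⟨by simp [hv], ih⟩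

theorem exists_forall_parent (hT : IsAntiTree E root) {β : ι → Type*}
    {P : ∀ v, β v → Prop} {Q : ∀ v, β (hT.parent v) → β v → Prop} (hP : ∀ v, ∃ x, P v x)
    (hQ : ∀ v, v ≠ root → ∀ x, P (hT.parent v) x → ∃ y, P v y ∧ Q v x y) :
    ∃ b : ∀ v, β v, (∀ v, P v (b v)) ∧ ∀ v, v ≠ root → Q v (b (hT.parent v)) (b v) := by
  choose x₀ hx₀ using hP
  choose next hnext using hQ
  let b : ∀ v, {x : β v // P v x} := (measure fun v => (hT.path v).length).wf.fix fun v ih =>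
    if hv : v = root then ⟨x₀ v, hx₀ v⟩
    else
      let x := ih (hT.parent v) (hT.length_path_parent_lt hv)
      ⟨next v hv x.1 x.2, (hnext v hv x.1 x.2).1⟩
  have hb (v : ι) (hv : v ≠ root) :
      (b v).1 = next v hv (b (hT.parent v)).1 (b (hT.parent v)).2 := by
    simp only [b]
    rw [WellFounded.fix_eq, dif_neg hv]
  refine ⟨fun v => (b v).1, fun v => (b v).2, fun v hv => ?_⟩
  simp only [hb v hv]
  exact (hnext v hv _ _).2

theorem exists_up_down_paths (hT : IsAntiTree E root) (i j : ι) :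
    ∃ (w : ι) (lu ld : List ι),
      lu.IsChain (fun c p => c ≠ root ∧ hT.parent c = p) ∧
      lu.head? = some i ∧ lu.getLast? = some w ∧
      ld.IsChain (fun p c => c ≠ root ∧ hT.parent c = p) ∧
      ld.head? = some w ∧ ld.getLast? = some j ∧ (lu ++ ld.tail).Nodup := by
  have hroot (v : ι) : root ∈ hT.path v := List.mem_of_getLast? (hT.isRootPath_path v).2.1
  obtain ⟨w, hw⟩ : ∃ w, (hT.path i).find? (· ∈ hT.path j) = some w :=
    Option.isSome_iff_exists.1 (List.find?_isSome.2 ⟨root, hroot i, by simpa using hroot j⟩)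
  obtain ⟨hwj, us, vs, hi, hus⟩ := List.find?_eq_some_iff_append.1 hw
  obtain ⟨ds, es, hj⟩ := List.append_of_mem (by simpa using hwj)
  have hpre_i : us ++ [w] <+: hT.path i := ⟨vs, by simp [hi]⟩
  have hpre_j : ds ++ [w] <+: hT.path j := ⟨es, by simp [hj]⟩
  have hhead_i := (hT.isRootPath_path i).1
  have hhead_j := (hT.isRootPath_path j).1
  rw [hi] at hhead_i
  rw [hj] at hhead_j
  refine ⟨w, us ++ [w], (ds ++ [w]).reverse, (hT.isChain_path i).prefix hpre_i,
    by simpa [List.head?_append] using hhead_i, by simp,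
    List.isChain_reverse.2 ((hT.isChain_path j).prefix hpre_j), by simp,
    by rw [List.getLast?_reverse]; simpa [List.head?_append] using hhead_j, ?_⟩
  rw [show us ++ [w] ++ ((ds ++ [w]).reverse).tail = us ++ (ds ++ [w]).reverse by simp,
    List.nodup_append]
  refine ⟨(hT.nodup_path i).sublist ((List.sublist_append_left us [w]).trans hpre_i.sublist),
    List.nodup_reverse.2 ((hT.nodup_path j).sublist hpre_j.sublist), ?_⟩
  rintro a ha _ hb rfl
  exact absurd (hpre_j.subset (List.mem_reverse.1 hb)) (by simpa using hus a ha)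

end IsAntiTree

end AntiTree

namespace MultiAlg

variable {ι : Type*} [Fintype ι] {α : ι → Type*} [∀ i, BooleanAlgebra (α i)]
  [∀ i, Fintype (α i)] (M : MultiAlg ι α)

def ClosedProjAt (B : ∀ i, α i) (i j : ι) : Prop :=
  ∀ h : i ≠ j, B j ≤ M.proj i j h (B i)

theorem proj_mono {i j : ι} (h : i ≠ j) : Monotone (M.proj i j h) := fun x y hxy => by
  rw [← sup_eq_right.2 hxy, M.proj_sup]
  exact le_sup_left

theorem le_iproj {i j : ι} (h : i ≠ j) {a : α i} {a' r : α j} (ha : IsAtom a) (ha' : IsAtom a')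
    (ha'r : a' ≤ r) (ha'a : a' ≤ M.proj i j h a) : a ≤ M.iproj i j h r :=
  Finset.le_sup (f := id) <| by
    simpa [isAtomRel_iff_isAtom, ha] using ⟨a', ha', ha'r, ha'a⟩

theorem exists_pathUp {E : ι → ι → Prop} {B : ∀ i, α i} :
    ∀ {l : List ι} {i w : ι}, l.IsChain (fun c p => E c p ∧ c ≠ p ∧ M.ClosedProjAt B c p) →
      l.head? = some i → l.getLast? = some w → ∀ {x : α i}, B i ≤ x →
      ∃ y, B w ≤ y ∧ M.PathUp E i w l x y
  | [], _, _, _, hi, _, _, _ => by simp at hi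
  | [a], i, w, _, hi, hw, x, hx => by
    simp only [List.head?_cons, List.getLast?_singleton, Option.some_inj] at hi hw
    subst hi hw
    exact ⟨x, hx, .refl a x⟩
  | a :: c :: l, i, w, hl, hi, hw, x, hx => by
    obtain rfl : a = i := Option.some.inj hi
    obtain ⟨⟨hE, hne, hBc⟩, hl⟩ := List.isChain_cons_cons.1 hl
    obtain ⟨y, hy, hpath⟩ := exists_pathUp hl rfl (by rwa [List.getLast?_cons_cons] at hw)
      ((hBc hne).trans (M.proj_mono hne hx))
    exact ⟨y, hy, .step hE hne x hpath⟩

theorem exists_pathDown {E : ι → ι → Prop} {B : ∀ i, α i} (hB : ∀ i, IsAtom (B i)) :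
    ∀ {l : List ι} {w j : ι}, l.IsChain (fun p c => E c p ∧ c ≠ p ∧ M.ClosedProjAt B c p) →
      l.head? = some w → l.getLast? = some j → ∀ {x : α w}, B w ≤ x →
      ∃ z, B j ≤ z ∧ M.PathDown E w j l x z
  | [], _, _, _, hw, _, _, _ => by simp at hw
  | [a], w, j, _, hw, hj, x, hx => by
    simp only [List.head?_cons, List.getLast?_singleton, Option.some_inj] at hw hj
    subst hw hj
    exact ⟨x, hx, .refl a x⟩
  | a :: c :: l, w, j, hl, hw, hj, x, hx => by
    obtain rfl : a = w := Option.some.inj hw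
    obtain ⟨⟨hE, hne, hBc⟩, hl⟩ := List.isChain_cons_cons.1 hl
    obtain ⟨z, hz, hpath⟩ :=
      exists_pathDown hB hl rfl (by rwa [List.getLast?_cons_cons] at hj)
        (M.le_iproj hne (hB c) (hB a) hx (hBc hne))
    exact ⟨z, hz, .step hE hne x hpath⟩

end MultiAlg

namespace PlenaryAntiTree

variable {ι : Type*} [Fintype ι] {α : ι → Type*} [∀ i, BooleanAlgebra (α i)]
  [∀ i, Fintype (α i)] {M : MultiAlg ι α}

theorem isAntiTree (T : PlenaryAntiTree M) : IsAntiTree T.E T.root :=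
  T.unique_path

theorem relClosedProj (T : PlenaryAntiTree M) {B : ∀ i, α i} (hB : ∀ i, IsAtom (B i))
    (hparent : ∀ v, v ≠ T.root → M.ClosedProjAt B v (T.isAntiTree.parent v)) :
    M.RelClosedProj B := by
  intro i j hij
  obtain ⟨w, lu, ld, hlu, hi, hw, hld, hw', hj, hnodup⟩ := T.isAntiTree.exists_up_down_paths i j
  have hedge {c p : ι} (h : c ≠ T.root ∧ T.isAntiTree.parent c = p) :
      T.E c p ∧ c ≠ p ∧ M.ClosedProjAt B c p := by
    obtain ⟨hc, rfl⟩ := h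
    exact ⟨T.isAntiTree.edge_parent hc, (T.isAntiTree.parent_ne hc).symm, hparent c hc⟩
  obtain ⟨y, hy, hup⟩ := M.exists_pathUp (hlu.imp fun _ _ => hedge) hi hw le_rfl
  obtain ⟨z, hz, hdown⟩ := M.exists_pathDown hB (hld.imp fun _ _ => hedge) hw' hj hy
  exact hz.trans (T.plenary i j hij (B i) (isAtomRel_iff_isAtom.2 (hB i)) w lu ld y z hup hdown
    hnodup)

theorem exists_basic_relClosedProj_le (T : PlenaryAntiTree M) {R : ∀ i, α i}
    (hR : M.PConsistent R) : ∃ B, M.Basic B ∧ M.RelClosedProj B ∧ B ≤ R := by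
  obtain ⟨B, hBR, hparent⟩ := T.isAntiTree.exists_forall_parent
    (P := fun v x => IsAtom x ∧ x ≤ R v) (Q := fun v x y => ∀ h, x ≤ M.proj v _ h y)
    (fun v => (eq_bot_or_exists_atom_le (R v)).resolve_left (hR.2 v)) fun v hv x hx => by
      have hne : v ≠ T.isAntiTree.parent v := (T.isAntiTree.parent_ne hv).symm
      obtain ⟨y, hy, hyR, hxy⟩ := exists_isAtom_le_of_le_map (M.proj_sup v _ hne) hx.1 (hR.2 v)
        (hx.2.trans (hR.1 v _ hne))
      exact ⟨y, ⟨hy, hyR⟩, fun _ => hxy⟩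
  exact ⟨B, fun v => isAtomRel_iff_isAtom.2 (hBR v).1,
    T.relClosedProj (fun v => (hBR v).1) hparent, fun v => (hBR v).2⟩

end PlenaryAntiTree

theorem SeqFormalism.I_mono {ι : Type*} [Fintype ι] {α : ι → Type*}
    [∀ i, BooleanAlgebra (α i)] [∀ i, Fintype (α i)] {U : Type*} (F : SeqFormalism ι α U)
    {R R' : ∀ i, α i} (h : R ≤ R') : F.I R ⊆ F.I R' := by
  have hinf := F.I_inf R R'
  rw [inf_eq_left.2 h] at hinf
  rw [hinf]
  exact Set.inter_subset_right

/-- in a sequential formalism over a tree multi-algebra whose basic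
relations closed under projection are satisfiable, every `↱`-consistent relation is
satisfiable. -/
theorem stmt_16 {ι : Type*} [Fintype ι] {α : ι → Type*} [∀ i, BooleanAlgebra (α i)]
    [∀ i, Fintype (α i)] {U : Type*} (F : SeqFormalism ι α U)
    (T : PlenaryAntiTree F.M)
    (hBasic : ∀ B : ∀ i, α i, F.M.Basic B → F.M.RelClosedProj B → F.I B ≠ ∅) :
    ∀ R : ∀ i, α i, F.M.PConsistent R → F.I R ≠ ∅ := by
  intro R hR hR_empty
  obtain ⟨B, hB, hB_closed, hBR⟩ := T.exists_basic_relClosedProj_le hR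
  exact hBasic B hB hB_closed (Set.subset_eq_empty (F.I_mono hBR) hR_empty)
end

section
/- Refinement theorem: Let F = (A, U, I) be a sequential formalism, S and S' subsets of A, and H a refinement from S to S'. If (A1) S is algebraically stable through H and (A2) every algebraically consistent network over S' is satisfiable, then every algebraically consistent network over S is satisfiable. If in addition S is a ↱-closed ∘∧-closed subset, then S is algebraically tractable. -/
open scoped Classical

/-! An algebraically consistent network `N` over `S` is refined by `H` to an algebraically
consistent network over `S'`, which has a solution by (A2); since `H(N) ⊆ N`, it solves `N`.
For tractability, `↱`- and `∘∧`-closure keep the algebraic closure of a network over `S`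
inside `S`. The closure is a fixed point of the refinement step, hence algebraically closed,
so when it is not trivially inconsistent the first part makes it satisfiable; conversely a
solution of a network also solves its closure, whose constraints are then nonempty. -/

theorem Function.isFixedPt_iterate_card_of_le_id {γ : Type*} [PartialOrder γ] [Fintype γ]
    {f : γ → γ} (hf : f ≤ id) (x : γ) : Function.IsFixedPt f (f^[Fintype.card γ] x) := by
  have hanti : Antitone fun m => f^[m] x := fun m n hmn =>
    Function.antitone_iterate_of_le_id hf hmn x
  obtain ⟨a, b, hne, heq⟩ := Fintype.exists_ne_map_eq_of_card_lt
    (fun k : Fin (Fintype.card γ + 1) => f^[k] x) (by simp)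
  wlog hab : a < b generalizing a b
  · exact this b a hne.symm heq.symm (lt_of_le_of_ne (not_lt.1 hab) hne.symm)
  -- `f^[a + 1] x` is squeezed between `f^[b] x = f^[a] x` and `f^[a] x`.
  have hfix : Function.IsFixedPt f (f^[a] x) := by
    have hsqueeze : f^[a] x ≤ f^[a + 1] x := heq ▸ hanti (Nat.succ_le_of_lt hab)
    rw [Function.IsFixedPt, ← Function.iterate_succ_apply' f]
    exact le_antisymm (hanti (Nat.le_succ _)) hsqueeze
  have hcard : Fintype.card γ = (Fintype.card γ - a) + a := by omega
  rw [hcard, Function.iterate_add_apply, hfix.iterate]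
  exact hfix

section Refinement

variable {ι : Type*} [Fintype ι] {α : ι → Type*} [∀ i, BooleanAlgebra (α i)]
  [∀ i, Fintype (α i)] {U : Type*} {V : Type*}

namespace SeqFormalism

variable (F : SeqFormalism ι α U)

theorem I_mono_s18 {R R' : ∀ i, α i} (h : R ≤ R') : F.I R ⊆ F.I R' := by
  rw [← inf_eq_left.mpr h, F.I_inf]
  exact Set.inter_subset_right

theorem I_eq_empty_of_apply_eq_bot {R : ∀ i, α i} {i : ι} (h : R i = ⊥) : F.I R = ∅ := by
  rw [F.I_basic]
  simp only [Set.iUnion_eq_empty]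
  rintro B ⟨hB, hBR⟩
  exact absurd (le_bot_iff.mp (h ▸ hBR i)) (hB i).1

end SeqFormalism

namespace MultiAlg

variable (M : MultiAlg ι α)

theorem pstep_le_id : M.pstep ≤ id := fun _ _ => inf_le_left

theorem pcl_le (R : ∀ i, α i) : M.pcl R ≤ R :=
  Function.iterate_le_id_of_le_id M.pstep_le_id _ R

theorem relClosedProj_of_isFixedPt_pstep {R : ∀ i, α i} (h : Function.IsFixedPt M.pstep R) :
    M.RelClosedProj R := by
  intro i j hij
  calc R j = M.pstep R j := (congrFun h j).symm
    _ ≤ if h : i ≠ j then M.proj i j h (R i) else ⊤ :=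
      inf_le_right.trans (Finset.inf_le (Finset.mem_univ i))
    _ = M.proj i j hij (R i) := dif_pos hij

theorem relClosedProj_of_le_pcl {R : ∀ i, α i} (h : R ≤ M.pcl R) : M.RelClosedProj R := by
  have hR : M.pcl R = R := le_antisymm (M.pcl_le R) h
  apply M.relClosedProj_of_isFixedPt_pstep
  rw [← hR]
  exact Function.isFixedPt_iterate_card_of_le_id M.pstep_le_id R

end MultiAlg

section AlgebraicClosure

variable [Fintype V] (M : MultiAlg ι α) (N : V → V → ∀ i, α i)

theorem aclStep_of_ne {x z : V} (hxz : x ≠ z) :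
    aclStep M N x z = M.pcl (N x z) ⊓ Finset.univ.inf fun y =>
      if x ≠ y ∧ y ≠ z then M.comp (N x y) (N y z) else ⊤ := if_neg hxz

theorem aclStep_le_pcl {x z : V} (hxz : x ≠ z) : aclStep M N x z ≤ M.pcl (N x z) := by
  rw [aclStep_of_ne M N hxz]
  exact inf_le_left

theorem aclStep_le_comp {x y z : V} (hxy : x ≠ y) (hyz : y ≠ z) (hxz : x ≠ z) :
    aclStep M N x z ≤ M.comp (N x y) (N y z) := by
  rw [aclStep_of_ne M N hxz]
  refine inf_le_right.trans ((Finset.inf_le (Finset.mem_univ y)).trans ?_)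
  rw [if_pos ⟨hxy, hyz⟩]

theorem aclStep_le_id : aclStep (V := V) M ≤ id := by
  intro N x z
  by_cases hxz : x = z
  · simp only [aclStep, if_pos hxz, id, le_refl]
  · exact (aclStep_le_pcl M N hxz).trans (M.pcl_le _)

theorem acl_le : acl M N ≤ N :=
  Function.iterate_le_id_of_le_id (aclStep_le_id M) _ N

theorem algClosed_of_isFixedPt_aclStep (h : Function.IsFixedPt (aclStep M) N) :
    AlgClosed M N := by
  have hN : ∀ x z, aclStep M N x z = N x z := fun x z => congrFun (congrFun h x) z
  refine ⟨fun x y z hxy hyz hxz => ?_, fun x z hxz => ?_⟩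
  · exact hN x z ▸ aclStep_le_comp M N hxy hyz hxz
  · exact M.relClosedProj_of_le_pcl (hN x z ▸ aclStep_le_pcl M N hxz)

theorem algClosed_acl : AlgClosed M (acl M N) :=
  algClosed_of_isFixedPt_aclStep M _
    (Function.isFixedPt_iterate_card_of_le_id (aclStep_le_id M) N)

end AlgebraicClosure

section Solutions

variable {F : SeqFormalism ι α U} {N N' : V → V → ∀ i, α i} {u : V → U}

theorem IsSolution.mono (hu : IsSolution F N u) (h : Refines N N') : IsSolution F N' u :=
  fun x y hxy => F.I_mono_s18 (h x y hxy) (hu x y hxy)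

theorem IsSolution.not_netTrivIncons (hu : IsSolution F N u) : ¬ NetTrivIncons N := by
  rintro ⟨x, y, hxy, i, hbot⟩
  simpa [F.I_eq_empty_of_apply_eq_bot hbot] using hu x y hxy

variable [Fintype V]

theorem IsSolution.aclStep (hu : IsSolution F N u) : IsSolution F (aclStep F.M N) u := by
  intro x z hxz
  have htop : (u x, u z) ∈ F.I ⊤ := F.I_mono_s18 le_top (hu x z hxz)
  rw [aclStep_of_ne F.M N hxz, F.I_inf, F.I_pcl]
  refine ⟨hu x z hxz, Finset.inf_induction (p := fun T => (u x, u z) ∈ F.I T) htop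
    (fun _ h₁ _ h₂ => by rw [F.I_inf]; exact ⟨h₁, h₂⟩) fun y _ => ?_⟩
  split_ifs with hy
  · exact F.I_comp _ _ ⟨⟨u y, hu x y hy.1, hu y z hy.2⟩, htop⟩
  · exact htop

theorem IsSolution.acl (hu : IsSolution F N u) : IsSolution F (acl F.M N) u :=
  Function.Iterate.rec (IsSolution F · u) hu (fun _ h => h.aclStep) _

end Solutions

section Subsets

variable [Fintype V] {M : MultiAlg ι α} {S : Set (∀ i, α i)} {N : V → V → ∀ i, α i}

-- `S` need not be closed under `⊓`; but `R ↦ R ⊓ T` maps `S` into `S` for every `T` that is a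
-- meet of compositions of members of `S`.
theorem NetworkOver.aclStep (hPcl : PclClosed M S) (hCI : CompInfClosed M S)
    (hN : NetworkOver S N) : NetworkOver S (aclStep M N) := by
  intro x z hxz
  rw [aclStep_of_ne M N hxz]
  refine Finset.inf_induction (p := fun T => ∀ R ∈ S, R ⊓ T ∈ S)
    (fun R hR => by rwa [inf_top_eq]) (fun T₁ h₁ T₂ h₂ R hR => inf_assoc R T₁ T₂ ▸ h₂ _ (h₁ R hR))
    (fun y _ R hR => ?_) _ (hPcl _ (hN x z hxz))
  split_ifs with hy
  · exact inf_comm R _ ▸ hCI _ (hN x y hy.1) _ (hN y z hy.2) R hR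
  · rwa [inf_top_eq]

theorem NetworkOver.acl (hPcl : PclClosed M S) (hCI : CompInfClosed M S)
    (hN : NetworkOver S N) : NetworkOver S (acl M N) :=
  Function.Iterate.rec (NetworkOver S) hN (fun _ h => h.aclStep hPcl hCI) _

end Subsets

end Refinement

theorem stmt_18_general {ι : Type*} [Fintype ι] {α : ι → Type*} [∀ i, BooleanAlgebra (α i)]
    [∀ i, Fintype (α i)] {U : Type*} (F : SeqFormalism ι α U)
    (S S' : Set (∀ i, α i)) (H : (∀ i, α i) → (∀ i, α i))
    (hRefine : ∀ R ∈ S, H R ≤ R)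
    (hInto : ∀ R ∈ S, H R ∈ S')
    (hA1 : ∀ (V : Type) [Fintype V] (N : V → V → ∀ i, α i),
      NetworkOver S N → AlgConsistent F.M N →
        AlgConsistent F.M (fun x y => H (N x y)))
    (hA2 : ∀ (V : Type) [Fintype V] (N : V → V → ∀ i, α i),
      NetworkOver S' N → AlgConsistent F.M N → NetSat F N) :
    (∀ (V : Type) [Fintype V] (N : V → V → ∀ i, α i),
      NetworkOver S N → AlgConsistent F.M N → NetSat F N) ∧
    (PclClosed F.M S → CompInfClosed F.M S → AlgTractable F S) := by
  have hSat : ∀ (V : Type) [Fintype V] (N : V → V → ∀ i, α i),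
      NetworkOver S N → AlgConsistent F.M N → NetSat F N := by
    intro V _ N hN hcons
    obtain ⟨u, hu⟩ := hA2 V _ (fun x y hxy => hInto _ (hN x y hxy)) (hA1 V N hN hcons)
    exact ⟨u, hu.mono fun x y hxy => hRefine _ (hN x y hxy)⟩
  refine ⟨hSat, fun hPcl hCI V _ N hN => ⟨fun ⟨u, hu⟩ => hu.acl.not_netTrivIncons, fun hacl => ?_⟩⟩
  obtain ⟨u, hu⟩ := hSat V _ (hN.acl hPcl hCI) ⟨algClosed_acl F.M N, hacl⟩
  exact ⟨u, hu.mono fun x y _ => acl_le F.M N x y⟩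

/-- Refinement theorem: if `H` is a refinement from `S` to `S'`,
(A1) `S` is algebraically stable through `H`, and (A2) algebraically consistent
networks over `S'` are satisfiable, then algebraically consistent networks over `S`
are satisfiable; if moreover `S` is `↱`-closed and `∘∧`-closed, then `S` is
algebraically tractable. -/
theorem stmt_18 {ι : Type*} [Fintype ι] {α : ι → Type*} [∀ i, BooleanAlgebra (α i)]
    [∀ i, Fintype (α i)] {U : Type*} (F : SeqFormalism ι α U)
    (S S' : Set (∀ i, α i)) (H : (∀ i, α i) → (∀ i, α i))
    (hRefine : ∀ R ∈ S, H R ≤ R)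
    (hNotBot : ∀ R ∈ S, (∀ i, R i ≠ ⊥) → ∀ i, H R i ≠ ⊥)
    (hInto : ∀ R ∈ S, H R ∈ S')
    (hA1 : ∀ (V : Type) [Fintype V] (N : V → V → ∀ i, α i),
      NetworkOver S N → AlgConsistent F.M N →
        AlgConsistent F.M (fun x y => H (N x y)))
    (hA2 : ∀ (V : Type) [Fintype V] (N : V → V → ∀ i, α i),
      NetworkOver S' N → AlgConsistent F.M N → NetSat F N) :
    (∀ (V : Type) [Fintype V] (N : V → V → ∀ i, α i),
      NetworkOver S N → AlgConsistent F.M N → NetSat F N) ∧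
    (PclClosed F.M S → CompInfClosed F.M S → AlgTractable F S) :=
  stmt_18_general F S S' H hRefine hInto hA1 hA2
end
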